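/- Fix $N \ge 2$, $0 < K < 1$, and constants $M, A \ge 0$. Define $S(N, A) = \min \sum_{n=0}^{N-1} \eta_n^2 A_n^2$ over all $(\eta_0,\dots,\eta_{N-1}) \in [0,1]^N$ with $\eta_{N-1} = 1$, where $A_0 = A$ and $A_{n+1} = K(1-\eta_n)A_n + M$. Then $S(N, A) = \frac{1-K^2}{1-K^{2N}}\left(K^{N-1}A + M\frac{1-K^{N-1}}{1-K}\right)^2$ if $A \ge M\frac{K^{N-1}(1+K)}{1+K^{N-1}}$, and $S(N, A) = A^2 + M^2\frac{(1-K^{N-1})^2(1-K^2)}{(1-K^{2N-2})(1-K)^2}$ otherwise; moreover $S(N,A) \le 2\frac{1-K^2}{1-K^{2N}}\left(K^{N-1}A + M\frac{1-K^{N-1}}{1-K}\right)^2$ in all cases (with $S(1,A) = A^2$). -/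

import Mathlib

noncomputable section

/-- The sequence `A_n` of the shift-optimization problem. -/
def shiftA (K M A : ℝ) (η : ℕ → ℝ) : ℕ → ℝ
  | 0 => A
  | (n + 1) => K * (1 - η n) * shiftA K M A η n + M

/-- The objective of the shift-optimization problem. -/
def shiftObj (K M A : ℝ) (N : ℕ) (η : ℕ → ℝ) : ℝ :=
  ∑ n ∈ Finset.range N, (η n) ^ 2 * (shiftA K M A η n) ^ 2

/-- The value `S(N, A)` of the shift-optimization problem. -/
def Sval (K M A : ℝ) (N : ℕ) : ℝ :=
  sInf {s : ℝ | ∃ η : ℕ → ℝ, (∀ n < N, 0 ≤ η n ∧ η n ≤ 1) ∧ η (N - 1) = 1 ∧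
    s = shiftObj K M A N η}

end

/-! Write `x n = η n * A n` for the amount removed at step `n`. The states are affine in the
removals, and the end condition `η (N - 1) = 1` pins the weighted total `∑ K ^ (N - 1 - n) * x n`
to the state reached without any removal. Cauchy–Schwarz then bounds the cost `∑ x n ^ 2` from
below by the interior value, with equality for removals proportional to `K ^ (N - 1 - n)`, and
these are admissible exactly above the threshold. Below the threshold, the cost as a function of
the first removal `x 0 ∈ [0, A]` (a square plus the Cauchy–Schwarz bound for the remaining
`N - 1` steps) is decreasing, so `η 0 = 1` is optimal and the problem restarts from `A 1 = M`,
which is always above its own threshold. -/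

namespace ShiftOptimization

open Finset

section General

variable (K M A : ℝ)

def removalState (x : ℕ → ℝ) : ℕ → ℝ
  | 0 => A
  | n + 1 => K * (removalState x n - x n) + M

theorem shiftA_eq_removalState (η : ℕ → ℝ) (n : ℕ) :
    shiftA K M A η n = removalState K M A (fun i => η i * shiftA K M A η i) n := by
  induction n with
  | zero => rfl
  | succ n ih => simp only [shiftA, removalState, ← ih]; ring

theorem removalState_sub_add_sum (x : ℕ → ℝ) (n : ℕ) :
    removalState K M A x n - x n + ∑ i ∈ range (n + 1), K ^ (n - i) * x i =
      K ^ n * A + M * ∑ i ∈ range n, K ^ i := by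
  induction n with
  | zero => simp [removalState]
  | succ n ih =>
    have hshift : ∑ i ∈ range (n + 1), K ^ (n + 1 - i) * x i =
        K * ∑ i ∈ range (n + 1), K ^ (n - i) * x i := by
      rw [mul_sum]
      refine sum_congr rfl fun i hi => ?_
      rw [Nat.sub_add_comm (mem_range_succ_iff.1 hi), pow_succ]
      ring
    rw [sum_range_succ, hshift, Nat.sub_self, removalState, geom_sum_succ]
    linear_combination K * ih

theorem sum_pow_sub_mul_pow_sub {j m : ℕ} (hjm : j ≤ m) :
    ∑ i ∈ range (j + 1), K ^ (j - i) * K ^ (m - i) =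
      K ^ (m - j) * ∑ i ∈ range (j + 1), (K ^ 2) ^ i := by
  rw [← sum_range_reflect (fun i => (K ^ 2) ^ i), mul_sum]
  refine sum_congr rfl fun i hi => ?_
  have hi := mem_range_succ_iff.1 hi
  rw [← pow_mul, ← pow_add, ← pow_add]
  congr 1
  omega

theorem shiftObj_eq_sum_sq (N : ℕ) (η : ℕ → ℝ) :
    shiftObj K M A N η = ∑ n ∈ range N, (η n * shiftA K M A η n) ^ 2 := by
  simp only [shiftObj, mul_pow]

theorem sq_le_geom_sum_mul_shiftObj (m : ℕ) (η : ℕ → ℝ) (hη : η m = 1) :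
    (K ^ m * A + M * ∑ i ∈ range m, K ^ i) ^ 2 ≤
      (∑ i ∈ range (m + 1), (K ^ 2) ^ i) * shiftObj K M A (m + 1) η := by
  set x := fun i => η i * shiftA K M A η i
  have hx : x m = removalState K M A x m := by
    show η m * shiftA K M A η m = _
    rw [hη, one_mul]
    exact shiftA_eq_removalState K M A η m
  have hweights :
      ∑ i ∈ range (m + 1), (K ^ (m - i)) ^ 2 = ∑ i ∈ range (m + 1), (K ^ 2) ^ i := by
    simpa [sq] using sum_pow_sub_mul_pow_sub K le_rfl (m := m)
  rw [← removalState_sub_add_sum K M A x m, ← hx, sub_self, zero_add, ← hweights,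
    shiftObj_eq_sum_sq]
  exact sum_mul_sq_le_sq_mul_sq _ _ _

theorem shiftObj_succ (N : ℕ) (η : ℕ → ℝ) :
    shiftObj K M A (N + 1) η =
      η 0 ^ 2 * A ^ 2 + shiftObj K M (K * (1 - η 0) * A + M) N (fun i => η (i + 1)) := by
  have hshift : ∀ n, shiftA K M A η (n + 1) =
      shiftA K M (K * (1 - η 0) * A + M) (fun i => η (i + 1)) n := by
    intro n
    induction n with
    | zero => rfl
    | succ n ih => rw [shiftA, ih]; rfl
  simp only [shiftObj, sum_range_succ', hshift]
  simp [shiftA, add_comm]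

theorem exists_shiftObj_eq_sum_sq (m : ℕ) (x : ℕ → ℝ)
    (hx : ∀ j ≤ m, 0 ≤ x j ∧ x j ≤ removalState K M A x j)
    (hlast : x m = removalState K M A x m) :
    ∃ η : ℕ → ℝ, (∀ n < m + 1, 0 ≤ η n ∧ η n ≤ 1) ∧ η m = 1 ∧
      shiftObj K M A (m + 1) η = ∑ j ∈ range (m + 1), x j ^ 2 := by
  set a := removalState K M A x
  set η : ℕ → ℝ := fun n => if a n = 0 then 1 else x n / a n
  -- a vanishing state forces a zero removal, so the fraction `η n` recovers `x n` in all cases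
  have hηa : ∀ n ≤ m, η n * a n = x n := by
    intro n hn
    by_cases h0 : a n = 0
    · simp [η, h0, le_antisymm (h0 ▸ (hx n hn).2) (hx n hn).1]
    · simp [η, h0]
  have hstate : ∀ n ≤ m, shiftA K M A η n = a n := by
    intro n hn
    induction n with
    | zero => rfl
    | succ n ih =>
      rw [shiftA, ih (by omega), mul_assoc, sub_mul, one_mul, hηa n (by omega)]
      rfl
  refine ⟨η, fun n hn => ?_, ?_, ?_⟩
  · obtain ⟨hx0, hxa⟩ := hx n (by omega)
    by_cases h0 : a n = 0
    · simp [η, h0]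
    · have hpos : 0 < a n := lt_of_le_of_ne (hx0.trans hxa) (Ne.symm h0)
      simp only [η, h0, if_false]
      exact ⟨div_nonneg hx0 hpos.le, (div_le_one hpos).2 hxa⟩
  · by_cases h0 : a m = 0
    · simp [η, h0]
    · simp [η, h0, hlast]
  · rw [shiftObj_eq_sum_sq]
    refine sum_congr rfl fun n hn => ?_
    have hn := mem_range_succ_iff.1 hn
    rw [hstate n hn, hηa n hn]

theorem Sval_eq_of_isLeast (N : ℕ) (v : ℝ)
    (hmem : ∃ η : ℕ → ℝ, (∀ n < N, 0 ≤ η n ∧ η n ≤ 1) ∧ η (N - 1) = 1 ∧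
      shiftObj K M A N η = v)
    (hle : ∀ η : ℕ → ℝ, (∀ n < N, 0 ≤ η n ∧ η n ≤ 1) → η (N - 1) = 1 →
      v ≤ shiftObj K M A N η) :
    Sval K M A N = v := by
  obtain ⟨η, hη, hlast, hv⟩ := hmem
  refine IsLeast.csInf_eq ⟨⟨η, hη, hlast, hv.symm⟩, ?_⟩
  rintro s ⟨η', hη', hlast', rfl⟩
  exact hle η' hη' hlast'

theorem Sval_one : Sval K M A 1 = A ^ 2 := by
  refine Sval_eq_of_isLeast K M A 1 _ ⟨fun _ => 1, by simp, rfl, by simp [shiftObj, shiftA]⟩ ?_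
  intro η _ hlast
  simp_all [shiftObj, shiftA]

end General

section Inequalities

-- feasibility at step `j` of the removals `c * K ^ (m - j)`, with `u = K ^ j`, `v = K ^ (m - j)`
theorem proportional_removal_le {K M A u v : ℝ} (hK0 : 0 < K) (hK1 : K < 1) (hM : 0 ≤ M)
    (hu0 : 0 ≤ u) (hu1 : u ≤ 1) (hv0 : 0 ≤ v) (hv1 : v ≤ 1)
    (h : M * (u * v * (1 + K)) ≤ A * (1 + u * v)) :
    (u * v * A + M * (1 - u * v) / (1 - K)) / ((1 - (K * (u * v)) ^ 2) / (1 - K ^ 2)) * v *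
      ((1 - (K * u) ^ 2) / (1 - K ^ 2)) ≤ u * A + M * (1 - u) / (1 - K) := by
  have hK : 1 - K ≠ 0 := by linarith
  have hK2 : 1 - K ^ 2 ≠ 0 := by nlinarith
  have huv : 0 ≤ u * v := mul_nonneg hu0 hv0
  have hKuv : 0 < 1 - (K * (u * v)) ^ 2 := by
    have : K * (u * v) < 1 := by nlinarith [mul_le_one₀ hu1 hv0 hv1]
    nlinarith [mul_nonneg hK0.le huv]
  rw [← sub_nonneg]
  have key : u * A + M * (1 - u) / (1 - K) -
      (u * v * A + M * (1 - u * v) / (1 - K)) / ((1 - (K * (u * v)) ^ 2) / (1 - K ^ 2)) * v *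
        ((1 - (K * u) ^ 2) / (1 - K ^ 2)) =
      (u * (1 - v ^ 2) * (1 - K) * (A * (1 + u * v) - M * (u * v * (1 + K))) +
        M * (1 - v) * (1 - u) * (1 - (K * (u * v)) ^ 2)) /
      ((1 + u * v) * (1 - K) * (1 - (K * (u * v)) ^ 2)) := by
    have : 1 + u * v ≠ 0 := by positivity
    generalize hQ : 1 - (K * (u * v)) ^ 2 = Q at hKuv ⊢
    have := hKuv.ne'
    field_simp
    rw [← hQ]
    ring
  rw [key]
  refine div_nonneg (add_nonneg (mul_nonneg (mul_nonneg (mul_nonneg hu0 ?_) ?_) ?_)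
    (mul_nonneg (mul_nonneg (mul_nonneg hM ?_) ?_) hKuv.le)) (mul_nonneg (mul_nonneg ?_ ?_) hKuv.le)
  all_goals nlinarith

theorem sq_add_mul_sq_le {A x c D R : ℝ} (hc : 0 ≤ c) (hxA : x ≤ A)
    (h : A ≤ c * D * R) : A ^ 2 + c * R ^ 2 ≤ x ^ 2 + c * (R + D * (A - x)) ^ 2 := by
  have hgap : 0 ≤ A - x := sub_nonneg.2 hxA
  nlinarith [mul_nonneg hgap (sub_nonneg.2 h),
    mul_nonneg (mul_nonneg hgap hgap) (mul_nonneg hc (sq_nonneg D))]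

theorem sq_add_mul_sq_le_two_mul {A c c' D R : ℝ} (hA : 0 ≤ A) (hR : 0 ≤ R) (hD : 0 ≤ D)
    (hc : 0 ≤ c) (hcc' : c ≤ 2 * c') (h : A ≤ c * D * R) :
    A ^ 2 + c * R ^ 2 ≤ 2 * (c' * (D * A + R) ^ 2) := by
  have hDA : 0 ≤ D * A + R := by positivity
  calc A ^ 2 + c * R ^ 2 ≤ c * D * R * A + c * R ^ 2 := by nlinarith
    _ = c * R * (D * A + R) := by ring
    _ ≤ c * (D * A + R) ^ 2 := by nlinarith [mul_nonneg hc (mul_nonneg hD hA), mul_nonneg hc hDA]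
    _ ≤ 2 * (c' * (D * A + R) ^ 2) := by nlinarith [sq_nonneg (D * A + R)]

theorem one_sub_sq_div_le_two_mul {K D : ℝ} (hD0 : 0 ≤ D) (hDK : D ≤ K) (hK1 : K < 1) :
    (1 - K ^ 2) / (1 - D ^ 2) ≤ 2 * ((1 - K ^ 2) / (1 - (K * D) ^ 2)) := by
  have hD1 : D < 1 := hDK.trans_lt hK1
  have hK2 : 0 ≤ 1 - K ^ 2 := by nlinarith
  have hKD : K * D < 1 := by nlinarith
  rw [mul_div_assoc',
    div_le_div_iff₀ (by nlinarith) (by nlinarith [mul_nonneg (hD0.trans hDK) hD0])]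
  have hDK2 : D ^ 2 ≤ K ^ 2 := pow_le_pow_left₀ hD0 hDK 2
  nlinarith [mul_nonneg hK2 (sq_nonneg (1 - K ^ 2)),
    mul_nonneg hK2 (mul_nonneg (sub_nonneg.2 hDK2) (by nlinarith : (0 : ℝ) ≤ 2 - K ^ 2))]

end Inequalities

section Contraction

-- the state after `n` steps without removal (`η = 0`), summed in closed form for `K ≠ 1`
noncomputable def reach (K M a : ℝ) (n : ℕ) : ℝ := K ^ n * a + M * (1 - K ^ n) / (1 - K)

-- the Cauchy–Schwarz lower bound for `S(N, A)`, attained above the threshold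
noncomputable def interiorValue (K M A : ℝ) (N : ℕ) : ℝ :=
  (1 - K ^ 2) / (1 - K ^ (2 * N)) * reach K M A (N - 1) ^ 2

variable {K M A : ℝ}

theorem geom_sum_eq_div {x : ℝ} (hx : x ≠ 1) (n : ℕ) :
    ∑ i ∈ range n, x ^ i = (1 - x ^ n) / (1 - x) :=
  (eq_div_iff (sub_ne_zero.2 hx.symm)).2 (geom_sum_mul_neg x n)

theorem geom_sum_sq_eq_div (hK0 : 0 < K) (hK1 : K < 1) (n : ℕ) :
    ∑ i ∈ range n, (K ^ 2) ^ i = (1 - (K ^ n) ^ 2) / (1 - K ^ 2) := by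
  rw [geom_sum_eq_div (by nlinarith), pow_right_comm]

theorem reach_eq_geom_sum (hK : K ≠ 1) (a : ℝ) (n : ℕ) :
    reach K M a n = K ^ n * a + M * ∑ i ∈ range n, K ^ i := by
  rw [reach, geom_sum_eq_div hK, mul_div_assoc]

theorem reach_mul_add (hK : K ≠ 1) (a : ℝ) (n : ℕ) :
    reach K M (K * a + M) n = reach K M a (n + 1) := by
  have : 1 - K ≠ 0 := sub_ne_zero.2 hK.symm
  simp only [reach]
  field_simp
  ring

theorem reach_nonneg (hK0 : 0 < K) (hK1 : K < 1) (hM : 0 ≤ M) {a : ℝ} (ha : 0 ≤ a) (n : ℕ) :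
    0 ≤ reach K M a n := by
  have h1 : 0 ≤ 1 - K ^ n := sub_nonneg.2 (pow_le_one₀ hK0.le hK1.le)
  have h2 : 0 < 1 - K := sub_pos.2 hK1
  unfold reach
  positivity

theorem interiorValue_succ (m : ℕ) :
    interiorValue K M A (m + 1) = (1 - K ^ 2) / (1 - (K ^ (m + 1)) ^ 2) * reach K M A m ^ 2 := by
  rw [interiorValue, Nat.add_sub_cancel, pow_mul, pow_right_comm]

theorem interiorValue_succ_eq_div (hK0 : 0 < K) (hK1 : K < 1) (m : ℕ) :
    interiorValue K M A (m + 1) =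
      (K ^ m * A + M * ∑ i ∈ range m, K ^ i) ^ 2 / ∑ i ∈ range (m + 1), (K ^ 2) ^ i := by
  rw [interiorValue_succ, ← reach_eq_geom_sum hK1.ne, geom_sum_sq_eq_div hK0 hK1,
    div_div_eq_mul_div]
  ring

theorem interiorValue_le_shiftObj (hK0 : 0 < K) (hK1 : K < 1) (m : ℕ) (η : ℕ → ℝ)
    (hη : η m = 1) : interiorValue K M A (m + 1) ≤ shiftObj K M A (m + 1) η := by
  rw [interiorValue_succ_eq_div hK0 hK1, div_le_iff₀' (geom_sum_pos (sq_nonneg K) m.succ_ne_zero)]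
  exact sq_le_geom_sum_mul_shiftObj K M A m η hη

-- Equality in Cauchy–Schwarz: the removals are proportional to the weights `K ^ (m - j)`.
theorem exists_shiftObj_eq_interiorValue (hK0 : 0 < K) (hK1 : K < 1) (hM : 0 ≤ M) (m : ℕ)
    (h : M * (K ^ m * (1 + K)) ≤ A * (1 + K ^ m)) :
    ∃ η : ℕ → ℝ, (∀ n < m + 1, 0 ≤ η n ∧ η n ≤ 1) ∧ η m = 1 ∧
      shiftObj K M A (m + 1) η = interiorValue K M A (m + 1) := by
  have hW : 0 < ∑ i ∈ range (m + 1), (K ^ 2) ^ i := geom_sum_pos (sq_nonneg K) m.succ_ne_zero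
  set c := reach K M A m / ∑ i ∈ range (m + 1), (K ^ 2) ^ i with hc
  set x : ℕ → ℝ := fun j => c * K ^ (m - j)
  have hgap : ∀ j ≤ m, removalState K M A x j - x j =
      reach K M A j - c * K ^ (m - j) * ∑ i ∈ range (j + 1), (K ^ 2) ^ i := by
    intro j hj
    have hsum : ∑ i ∈ range (j + 1), K ^ (j - i) * x i =
        c * K ^ (m - j) * ∑ i ∈ range (j + 1), (K ^ 2) ^ i := by
      simp only [x, mul_left_comm _ c, ← mul_sum, sum_pow_sub_mul_pow_sub K hj, mul_assoc]
    rw [reach_eq_geom_sum hK1.ne, ← removalState_sub_add_sum K M A x j, hsum]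
    ring
  have hA : 0 ≤ A := by
    have : 0 ≤ A * (1 + K ^ m) := le_trans (by positivity) h
    exact nonneg_of_mul_nonneg_left this (by positivity)
  have hc0 : 0 ≤ c := div_nonneg (reach_nonneg hK0 hK1 hM hA m) hW.le
  have hfeas :
      ∀ j ≤ m, c * K ^ (m - j) * ∑ i ∈ range (j + 1), (K ^ 2) ^ i ≤ reach K M A j := by
    intro j hj
    have hm : K ^ m = K ^ j * K ^ (m - j) := by rw [← pow_add, Nat.add_sub_cancel' hj]
    rw [hc, geom_sum_sq_eq_div hK0 hK1, geom_sum_sq_eq_div hK0 hK1, pow_succ' K m, pow_succ' K j,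
      reach, reach, hm]
    exact proportional_removal_le hK0 hK1 hM (pow_nonneg hK0.le j) (pow_le_one₀ hK0.le hK1.le)
      (pow_nonneg hK0.le (m - j)) (pow_le_one₀ hK0.le hK1.le) (by rwa [← hm])
  have hlast : c * K ^ (m - m) * ∑ i ∈ range (m + 1), (K ^ 2) ^ i = reach K M A m := by
    rw [Nat.sub_self, pow_zero, mul_one, hc, div_mul_cancel₀ _ hW.ne']
  obtain ⟨η, hη, hηm, hobj⟩ := exists_shiftObj_eq_sum_sq K M A m x
    (fun j hj => ⟨by positivity, by linarith [hgap j hj, hfeas j hj]⟩)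
    (by linarith [hgap m le_rfl])
  refine ⟨η, hη, hηm, hobj.trans ?_⟩
  have hweights := sum_pow_sub_mul_pow_sub K (le_refl m)
  rw [Nat.sub_self, pow_zero, one_mul] at hweights
  have hsq : ∑ j ∈ range (m + 1), x j ^ 2 = c ^ 2 * ∑ i ∈ range (m + 1), (K ^ 2) ^ i := by
    rw [← hweights, mul_sum]
    exact sum_congr rfl fun j _ => by ring
  rw [hsq, interiorValue_succ_eq_div hK0 hK1, ← reach_eq_geom_sum hK1.ne, hc]
  field_simp

theorem Sval_eq_interiorValue (hK0 : 0 < K) (hK1 : K < 1) (hM : 0 ≤ M) (m : ℕ)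
    (h : M * (K ^ m * (1 + K)) ≤ A * (1 + K ^ m)) :
    Sval K M A (m + 1) = interiorValue K M A (m + 1) :=
  Sval_eq_of_isLeast K M A (m + 1) _ (exists_shiftObj_eq_interiorValue hK0 hK1 hM m h)
    fun η _ hη => interiorValue_le_shiftObj hK0 hK1 m η hη

theorem interiorValue_mul_add_succ (hK : K ≠ 1) (a : ℝ) (m : ℕ) :
    interiorValue K M (K * a + M) (m + 1) =
      (1 - K ^ 2) / (1 - (K ^ (m + 1)) ^ 2) * (reach K M 0 (m + 1) + K ^ (m + 1) * a) ^ 2 := by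
  rw [interiorValue_succ, reach_mul_add hK]
  simp only [reach]
  ring

theorem interiorValue_self_succ (hK : K ≠ 1) (m : ℕ) :
    interiorValue K M M (m + 1) =
      (1 - K ^ 2) / (1 - (K ^ (m + 1)) ^ 2) * reach K M 0 (m + 1) ^ 2 := by
  simpa using interiorValue_mul_add_succ (M := M) hK 0 m

theorem le_mul_reach_of_le (hK0 : 0 < K) (hK1 : K < 1) (m : ℕ)
    (h : A * (1 + K ^ (m + 1)) ≤ M * (K ^ (m + 1) * (1 + K))) :
    A ≤ (1 - K ^ 2) / (1 - (K ^ (m + 1)) ^ 2) * K ^ (m + 1) * reach K M 0 (m + 1) := by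
  have hD1 : K ^ (m + 1) < 1 := pow_lt_one₀ hK0.le hK1 m.succ_ne_zero
  have hD0 : 0 < K ^ (m + 1) := pow_pos hK0 _
  have hK : 1 - K ≠ 0 := by linarith
  have : (1 - K ^ 2) / (1 - (K ^ (m + 1)) ^ 2) * K ^ (m + 1) * reach K M 0 (m + 1) =
      M * (K ^ (m + 1) * (1 + K)) / (1 + K ^ (m + 1)) := by
    have : 1 - (K ^ (m + 1)) ^ 2 ≠ 0 := by nlinarith
    have : 1 + K ^ (m + 1) ≠ 0 := by positivity
    simp only [reach]
    field_simp
    ring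
  rw [this, le_div_iff₀ (by positivity)]
  exact h

theorem Sval_eq_sq_add_interiorValue (hK0 : 0 < K) (hK1 : K < 1) (hM : 0 ≤ M) (hA : 0 ≤ A)
    (m : ℕ)
    (h : A * (1 + K ^ (m + 1)) ≤ M * (K ^ (m + 1) * (1 + K))) :
    Sval K M A (m + 2) = A ^ 2 + interiorValue K M M (m + 1) := by
  have hc : 0 ≤ (1 - K ^ 2) / (1 - (K ^ (m + 1)) ^ 2) := by
    have : K ^ (m + 1) ≤ 1 := pow_le_one₀ hK0.le hK1.le
    exact div_nonneg (by nlinarith) (by nlinarith [pow_pos hK0 (m + 1)])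
  have hMthreshold : M * (K ^ m * (1 + K)) ≤ M * (1 + K ^ m) := by
    have : K ^ m * K ≤ 1 := (pow_succ K m).symm ▸ pow_le_one₀ hK0.le hK1.le
    exact mul_le_mul_of_nonneg_left (by linarith) hM
  refine Sval_eq_of_isLeast K M A (m + 2) _ ?_ fun η hη hlast => ?_
  · obtain ⟨η, hη, hηm, hobj⟩ := exists_shiftObj_eq_interiorValue hK0 hK1 hM m hMthreshold
    refine ⟨fun | 0 => 1 | n + 1 => η n, ?_, hηm, ?_⟩
    · rintro (_ | n) hn
      · norm_num
      · exact hη n (by omega)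
    · rw [shiftObj_succ]
      simpa using hobj
  · have hx : η 0 * A ≤ A := mul_le_of_le_one_left hA (hη 0 (by omega)).2
    calc A ^ 2 + interiorValue K M M (m + 1)
        = A ^ 2 + (1 - K ^ 2) / (1 - (K ^ (m + 1)) ^ 2) * reach K M 0 (m + 1) ^ 2 := by
          rw [interiorValue_self_succ hK1.ne]
      _ ≤ (η 0 * A) ^ 2 + (1 - K ^ 2) / (1 - (K ^ (m + 1)) ^ 2) *
            (reach K M 0 (m + 1) + K ^ (m + 1) * (A - η 0 * A)) ^ 2 :=
          sq_add_mul_sq_le hc hx (le_mul_reach_of_le hK0 hK1 m h)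
      _ = η 0 ^ 2 * A ^ 2 + interiorValue K M (K * (1 - η 0) * A + M) (m + 1) := by
          rw [show K * (1 - η 0) * A = K * (A - η 0 * A) by ring,
            interiorValue_mul_add_succ hK1.ne]
          ring
      _ ≤ η 0 ^ 2 * A ^ 2 +
            shiftObj K M (K * (1 - η 0) * A + M) (m + 1) (fun i => η (i + 1)) := by
          gcongr
          exact interiorValue_le_shiftObj hK0 hK1 m _ hlast
      _ = shiftObj K M A (m + 2) η := (shiftObj_succ K M A (m + 1) η).symm

theorem sq_add_interiorValue_le (hK0 : 0 < K) (hK1 : K < 1) (hM : 0 ≤ M) (hA : 0 ≤ A) (m : ℕ)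
    (h : A * (1 + K ^ (m + 1)) ≤ M * (K ^ (m + 1) * (1 + K))) :
    A ^ 2 + interiorValue K M M (m + 1) ≤ 2 * interiorValue K M A (m + 2) := by
  have hD0 : 0 ≤ K ^ (m + 1) := pow_nonneg hK0.le _
  have hDK : K ^ (m + 1) ≤ K := pow_le_of_le_one hK0.le hK1.le m.succ_ne_zero
  have hc : 0 ≤ (1 - K ^ 2) / (1 - (K ^ (m + 1)) ^ 2) :=
    div_nonneg (by nlinarith) (by nlinarith)
  rw [interiorValue_self_succ hK1.ne, show m + 2 = m + 1 + 1 from rfl, interiorValue_succ,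
    pow_succ' K (m + 1), show reach K M A (m + 1) = K ^ (m + 1) * A + reach K M 0 (m + 1) by
      simp [reach]]
  exact sq_add_mul_sq_le_two_mul hA (reach_nonneg hK0 hK1 hM le_rfl _) hD0 hc
    (one_sub_sq_div_le_two_mul hD0 hDK hK1) (le_mul_reach_of_le hK0 hK1 m h)

theorem interiorValue_nonneg (hK0 : 0 < K) (hK1 : K < 1) (N : ℕ) : 0 ≤ interiorValue K M A N :=
  mul_nonneg (div_nonneg (by nlinarith) (sub_nonneg.2 (pow_le_one₀ hK0.le hK1.le))) (sq_nonneg _)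

end Contraction

end ShiftOptimization

open ShiftOptimization in
theorem statement_10 (N : ℕ) (hN : 2 ≤ N) (K M A : ℝ)
    (hK0 : 0 < K) (hK1 : K < 1) (hM : 0 ≤ M) (hA : 0 ≤ A) :
    Sval K M A 1 = A ^ 2 ∧
    (Sval K M A N =
      if M * (K ^ (N - 1) * (1 + K) / (1 + K ^ (N - 1))) ≤ A then
        (1 - K ^ 2) / (1 - K ^ (2 * N)) *
          (K ^ (N - 1) * A + M * (1 - K ^ (N - 1)) / (1 - K)) ^ 2
      else
        A ^ 2 + M ^ 2 * ((1 - K ^ (N - 1)) ^ 2 * (1 - K ^ 2) /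
          ((1 - K ^ (2 * N - 2)) * (1 - K) ^ 2))) ∧
    Sval K M A N ≤ 2 * (1 - K ^ 2) / (1 - K ^ (2 * N)) *
      (K ^ (N - 1) * A + M * (1 - K ^ (N - 1)) / (1 - K)) ^ 2 := by
  obtain ⟨m, rfl⟩ : ∃ m, N = m + 2 := ⟨N - 2, by omega⟩
  have hD : (0 : ℝ) < 1 + K ^ (m + 1) := by positivity
  have hK : 1 - K ≠ 0 := by linarith
  have hbound : 2 * (1 - K ^ 2) / (1 - K ^ (2 * (m + 2))) *
      (K ^ (m + 1) * A + M * (1 - K ^ (m + 1)) / (1 - K)) ^ 2 =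
        2 * interiorValue K M A (m + 2) := by
    rw [interiorValue, show m + 2 - 1 = m + 1 from rfl, reach]
    ring
  simp only [show m + 2 - 1 = m + 1 from rfl, show 2 * (m + 2) - 2 = 2 * (m + 1) by omega,
    mul_div_assoc', div_le_iff₀ hD, hbound]
  refine ⟨Sval_one K M A, ?_⟩
  split_ifs with h
  · rw [Sval_eq_interiorValue hK0 hK1 hM (m + 1) h]
    exact ⟨rfl, by linarith [interiorValue_nonneg (M := M) (A := A) hK0 hK1 (m + 2)]⟩
  · have h' := (not_le.1 h).le
    refine ⟨?_, (Sval_eq_sq_add_interiorValue hK0 hK1 hM hA m h').trans_le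
      (sq_add_interiorValue_le hK0 hK1 hM hA m h')⟩
    have : 1 - K ^ (2 * (m + 1)) ≠ 0 := (sub_pos.2 (pow_lt_one₀ hK0.le hK1 (by omega))).ne'
    rw [Sval_eq_sq_add_interiorValue hK0 hK1 hM hA m h', interiorValue, Nat.add_sub_cancel, reach]
    field_simp
    ring
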